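/- Let G be a group and S a nonempty set of subgroups of G closed under conjugation such that whenever A, B ∈ S and A ≤ B, then A and B are conjugate in G (the 'fully reduced' condition). Let E be the set of subgroups of G contained in some member of S (the 'elliptic' subgroups). Then an elliptic subgroup H is vertical with respect to E if and only if H contains some member of S. -/
import Mathlib


/-- The conjugate subgroup `g⁻¹ H g`. -/
def conjSubgroup {G : Type*} [Group G] (H : Subgroup G) (g : G) : Subgroup G :=
  H.map (MulAut.conj g⁻¹).toMonoidHom

lemma conjSubgroup_mono {G : Type*} [Group G] {A B : Subgroup G} (h : A ≤ B) (g : G) :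
    conjSubgroup A g ≤ conjSubgroup B g :=
  Subgroup.map_mono h

lemma conjSubgroup_conjSubgroup_inv {G : Type*} [Group G] (A : Subgroup G) (g : G) :
    conjSubgroup (conjSubgroup A g) g⁻¹ = A := by
  unfold conjSubgroup
  ext x
  simp [Subgroup.mem_map, mul_assoc]

/-- Let `S` be a nonempty conjugation-closed set of subgroups such that any
two members `A ≤ B` of `S` are conjugate (fully reduced condition), and let `E` be the set
of subgroups contained in some member of `S` (elliptic subgroups).  Then an elliptic
subgroup is vertical iff it contains some member of `S`. -/
theorem stmt_6 {G : Type*} [Group G] (S : Set (Subgroup G)) (hne : S.Nonempty)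
    (hconj : ∀ A ∈ S, ∀ g : G, conjSubgroup A g ∈ S)
    (hfr : ∀ A ∈ S, ∀ B ∈ S, A ≤ B → ∃ g : G, conjSubgroup A g = B)
    (H : Subgroup G) (hH : ∃ A ∈ S, H ≤ A) :
    (∀ K : Subgroup G, (∃ A ∈ S, K ≤ A) → H ≤ K → ∃ g : G, conjSubgroup K g ≤ H) ↔
      ∃ A ∈ S, A ≤ H := by
  obtain ⟨A, hA, hHA⟩ := hH
  constructor
  · intro hvert
    obtain ⟨g, hg⟩ := hvert A ⟨A, hA, le_refl A⟩ hHA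
    exact ⟨conjSubgroup A g, hconj A hA g, hg⟩
  · rintro ⟨A', hA', hA'H⟩ K ⟨B, hB, hKB⟩ hHK
    obtain ⟨g, hg⟩ := hfr A' hA' B hB (hA'H.trans (hHK.trans hKB))
    refine ⟨g⁻¹, ?_⟩
    have := conjSubgroup_mono hKB g⁻¹
    rw [← hg, conjSubgroup_conjSubgroup_inv] at this
    exact this.trans hA'H
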